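/- arXiv:math/0508399 — 2 statements merged into one kernel-verified Lean document; each statement's English description precedes it below -/
import Mathlib

section
/- Let Γ be a bipartite distance-regular graph with diameter D ≥ 4, valency k ≥ 3, and eigenvalues k = θ_0 > θ_1 > ⋯ > θ_D. Then: (i) p_i(θ_1) > 0 for 0 ≤ i ≤ D-2, and p_{D-1}(θ_1) = 0, p_D(θ_1) = 0; (ii) (−1)^i p_i(θ_{D-1}) > 0 for 0 ≤ i ≤ D-2, and p_{D-1}(θ_{D-1}) = 0, p_D(θ_{D-1}) = 0. -/
open Polynomial Finset Matrix

noncomputable section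

attribute [local instance] Classical.propDecidable

/-- A bipartite distance-regular graph with diameter `D ≥ 4` and valency `k ≥ 3`:
a finite connected simple graph such that for all `h,i,j ≤ D` and all vertices `x,y`
at distance `h`, the number of vertices `z` with `∂(x,z) = i` and `∂(z,y) = j`
is the constant `p h i j`, and `p h i j = 0` whenever `h + i + j` is odd. -/
structure BDRG (α : Type) [Fintype α] [DecidableEq α] where
  G : SimpleGraph α
  hconn : G.Connected
  D : ℕ
  hD : 4 ≤ D
  hdist : ∀ x y : α, G.dist x y ≤ D
  hdiam : ∃ x y : α, G.dist x y = D
  p : ℕ → ℕ → ℕ → ℕ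
  hp : ∀ h i j : ℕ, h ≤ D → i ≤ D → j ≤ D → ∀ x y : α, G.dist x y = h →
      Nat.card {z : α // G.dist x z = i ∧ G.dist z y = j} = p h i j
  hbip : ∀ h i j : ℕ, h ≤ D → i ≤ D → j ≤ D → Odd (h + i + j) → p h i j = 0
  hk : 3 ≤ p 0 1 1

namespace BDRG

variable {α : Type} [Fintype α] [DecidableEq α] (Γ : BDRG α)

/-- The intersection number `c_i = p^i_{1,i-1}` (with `c_0 = 0`), as a real number. -/
def c (i : ℕ) : ℝ := if i = 0 then 0 else (Γ.p i 1 (i - 1) : ℝ)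

/-- The intersection number `b_i = p^i_{1,i+1}` (with `b_D = 0`), as a real number. -/
def b (i : ℕ) : ℝ := if i = Γ.D then 0 else (Γ.p i 1 (i + 1) : ℝ)

/-- The valency `k = b_0`. -/
def k : ℝ := Γ.b 0

/-- The `i`-th valency `k_i = p^0_{ii}`, as a real number. -/
def kv (i : ℕ) : ℝ := (Γ.p 0 i i : ℝ)

/-- The polynomials `f_i` defined by `f_0 = 1`, `f_1 = λ` and
`λ f_i = b_{i-1} f_{i-1} + c_{i+1} f_{i+1}`. -/
def f : ℕ → Polynomial ℝ
  | 0 => 1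
  | 1 => Polynomial.X
  | (i + 2) => Polynomial.C (Γ.c (i + 2))⁻¹ *
      (Polynomial.X * f (i + 1) - Polynomial.C (Γ.b i) * f i)

/-- The polynomials `p_i = Σ_{h ≤ i, i-h even} f_h`. -/
def pp (i : ℕ) : Polynomial ℝ :=
  ∑ h ∈ Finset.range (i + 1), if (i - h) % 2 = 0 then Γ.f h else 0

/-- The `i`-th distance matrix of `Γ`, over `ℂ`. -/
def Amat (i : ℕ) : Matrix α α ℂ :=
  Matrix.of fun y z => if Γ.G.dist y z = i then 1 else 0

/-- The all-ones matrix. -/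
def Jmat (α : Type) [Fintype α] : Matrix α α ℂ := Matrix.of fun _ _ => (1 : ℂ)

/-- `θ 0 > θ 1 > ⋯ > θ D` are the distinct eigenvalues of the adjacency matrix,
with `θ 0 = k`. -/
def IsEigenvalueSeq (θ : ℕ → ℝ) : Prop :=
  θ 0 = Γ.k ∧
  (∀ i j : ℕ, i < j → j ≤ Γ.D → θ j < θ i) ∧
  (∀ i ≤ Γ.D, Module.End.HasEigenvalue (Matrix.mulVecLin (Γ.Amat 1)) ((θ i : ℂ))) ∧
  (∀ μ : ℂ, Module.End.HasEigenvalue (Matrix.mulVecLin (Γ.Amat 1)) μ →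
    ∃ i ≤ Γ.D, μ = ((θ i : ℝ) : ℂ))

/-- The multiplicity of the eigenvalue `t`: the dimension of the corresponding
eigenspace of the adjacency matrix. -/
def m (t : ℝ) : ℕ :=
  Module.finrank ℂ (Module.End.eigenspace (Matrix.mulVecLin (Γ.Amat 1)) (t : ℂ))

/-- `E` is the primitive idempotent for the eigenvalue `t`: the orthogonal projection
onto the `t`-eigenspace of the adjacency matrix. -/
def IsPrimitiveIdempotent (t : ℝ) (E : Matrix α α ℂ) : Prop :=
  Eᴴ = E ∧ E * E = E ∧
  ∀ v : α → ℂ, (Γ.Amat 1).mulVec v = (t : ℂ) • v ↔ E.mulVec v = v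

/-- `θs` is the dual eigenvalue sequence of the matrix `E`, i.e.
`E = |X|⁻¹ Σ_{i=0}^{D} θs i • A_i`. -/
def IsDualEigSeq (E : Matrix α α ℂ) (θs : ℕ → ℝ) : Prop :=
  E = (Fintype.card α : ℂ)⁻¹ • ∑ i ∈ Finset.range (Γ.D + 1), ((θs i : ℝ) : ℂ) • Γ.Amat i

/-- The two-variable polynomial `Ψ_i`, as a function of two real variables. -/
def Psi (i : ℕ) (lam mu : ℝ) : ℝ :=
  ∑ h ∈ Finset.range (i + 1), if (i - h) % 2 = 0 then
    (Γ.pp h).eval lam * (Γ.pp h).eval mu *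
      (Γ.kv i * Γ.b i * Γ.b (i + 1)) / (Γ.kv h * Γ.b h * Γ.b (h + 1))
  else 0

/-- The index `n` is admissible: `θ_n` is one of `θ_1, θ_d, θ_{d+1}, θ_{D-1}` if `D` is
odd (`d = (D-1)/2`), and one of `θ_1, θ_{D-1}` if `D` is even. -/
def Admissible (n : ℕ) : Prop :=
  (Odd Γ.D ∧ (n = 1 ∨ n = Γ.D / 2 ∨ n = Γ.D / 2 + 1 ∨ n = Γ.D - 1)) ∨
  (Even Γ.D ∧ (n = 1 ∨ n = Γ.D - 1))

/-- The polynomials `g_i` associated with the scalar `t`. -/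
def g (t : ℝ) (i : ℕ) : Polynomial ℝ :=
  ∑ h ∈ Finset.range (i + 1), if (i - h) % 2 = 0 then
    Polynomial.C ((Γ.pp h).eval t * (Γ.kv i * Γ.b i * Γ.b (i + 1)) /
        ((Γ.pp i).eval t * (Γ.kv h * Γ.b h * Γ.b (h + 1)))) * Γ.pp h
  else 0

/-- The dual idempotent `E_i* = E_i*(x)`. -/
def Estar (x : α) (i : ℕ) : Matrix α α ℂ :=
  Matrix.of fun y z => if y = z ∧ Γ.G.dist x y = i then 1 else 0

/-- The Hermitian inner product `⟨u,v⟩ = uᵗ v̄` on the standard module `ℂ^X`. -/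
def dotp {α : Type} [Fintype α] (u v : α → ℂ) : ℂ := ∑ y, u y * (starRingEnd ℂ) (v y)

/-- The square norm `‖v‖²` with respect to the Hermitian inner product. -/
def nrmsq {α : Type} [Fintype α] (v : α → ℂ) : ℝ := ∑ y, Complex.normSq (v y)

/-- The vector `s_2 = Σ_{∂(x,y)=2} ŷ`. -/
def s2vec (x : α) : α → ℂ := fun y => if Γ.G.dist x y = 2 then 1 else 0

/-- The scalar `ψ = b_2 (1 - b_3/(1+η))`. -/
def psi (η : ℝ) : ℝ := Γ.b 2 * (1 - Γ.b 3 / (1 + η))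

/-- The scalar `θ̃ = -1 - b_2 b_3/(t² - b_2)`. -/
def tilde (t : ℝ) : ℝ := -1 - Γ.b 2 * Γ.b 3 / (t ^ 2 - Γ.b 2)

/-- The adjacency matrix of the local graph `Γ₂² = Γ₂²(x)`, whose vertices are the
vertices at distance 2 from `x`, adjacent when at distance 2 in `Γ`. -/
def localAdj (x : α) :
    Matrix {y : α // Γ.G.dist x y = 2} {y : α // Γ.G.dist x y = 2} ℂ :=
  Matrix.of fun y z => if Γ.G.dist (y : α) (z : α) = 2 then 1 else 0

/-- `η 1, …, η k₂` enumerate the eigenvalues of the local graph `Γ₂²(x)` with their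
multiplicities, ordered so that `η 1 = p²₂₂` and `η i = b₃ - 1` for `2 ≤ i ≤ k`. -/
def IsLocalEigSeq (x : α) (η : ℕ → ℝ) : Prop :=
  η 1 = (Γ.p 2 2 2 : ℝ) ∧
  (∀ i : ℕ, 2 ≤ i → i ≤ Γ.p 0 1 1 → η i = Γ.b 3 - 1) ∧
  ∀ t : ℝ, Nat.card {i : ℕ // i ∈ Finset.Icc 1 (Γ.p 0 2 2) ∧ η i = t} =
    Module.finrank ℂ (Module.End.eigenspace (Matrix.mulVecLin (Γ.localAdj x)) (t : ℂ))

/-- The subconstituent (Terwilliger) algebra `T = T(x)`, generated by the adjacency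
matrix together with the dual idempotents `E_0*, …, E_D*`. -/
def Talg (x : α) : Subalgebra ℂ (Matrix α α ℂ) :=
  Algebra.adjoin ℂ ({Γ.Amat 1} ∪ Set.range (Γ.Estar x))

/-- A `T`-module: a `T`-invariant subspace of the standard module `ℂ^X`. -/
def IsTModule (x : α) (W : Submodule ℂ (α → ℂ)) : Prop :=
  ∀ B ∈ Γ.Talg x, ∀ w ∈ W, B.mulVec w ∈ W

/-- An irreducible `T`-module. -/
def IsIrreducibleTModule (x : α) (W : Submodule ℂ (α → ℂ)) : Prop :=
  W ≠ ⊥ ∧ Γ.IsTModule x W ∧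
    ∀ W' : Submodule ℂ (α → ℂ), W' ≤ W → Γ.IsTModule x W' → W' = ⊥ ∨ W' = W

/-- The endpoint of a `T`-module `W` is `min {i : E_i* W ≠ 0}`. -/
def HasEndpoint (x : α) (W : Submodule ℂ (α → ℂ)) (e : ℕ) : Prop :=
  (∃ w ∈ W, (Γ.Estar x e).mulVec w ≠ 0) ∧
  ∀ i : ℕ, i < e → ∀ w ∈ W, (Γ.Estar x i).mulVec w = 0

/-- A `T`-module `W` is thin whenever `dim E_i* W ≤ 1` for all `i`. -/
def IsThin (x : α) (W : Submodule ℂ (α → ℂ)) : Prop :=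
  ∀ i : ℕ, Module.finrank ℂ (W.map (Matrix.mulVecLin (Γ.Estar x i))) ≤ 1

/-- `W` has local eigenvalue `η`: every vector of `E_2* W` is an eigenvector of
`E_2* A_2 E_2*` with eigenvalue `η`. -/
def HasLocalEig (x : α) (W : Submodule ℂ (α → ℂ)) (η : ℝ) : Prop :=
  ∀ w ∈ W, (Γ.Estar x 2 * Γ.Amat 2 * Γ.Estar x 2).mulVec w =
    (η : ℂ) • ((Γ.Estar x 2).mulVec w)

/-- Membership in `U`, the orthogonal complement of `E_2* V_0 + E_2* Y` in `E_2* V`,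
where `V_0` is the (unique) irreducible `T`-module with endpoint `0` and `Y` is the
span of the irreducible `T`-modules with endpoint `1`. -/
def memU (x : α) (V0 : Submodule ℂ (α → ℂ)) (v : α → ℂ) : Prop :=
  (Γ.Estar x 2).mulVec v = v ∧
  (∀ w ∈ V0, BDRG.dotp v ((Γ.Estar x 2).mulVec w) = 0) ∧
  ∀ W : Submodule ℂ (α → ℂ), Γ.IsIrreducibleTModule x W → Γ.HasEndpoint x W 1 →
    ∀ w ∈ W, BDRG.dotp v ((Γ.Estar x 2).mulVec w) = 0

/-- Membership in `U_η = {v ∈ U : E_2* A_2 E_2* v = η v}`. -/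
def memUeta (x : α) (V0 : Submodule ℂ (α → ℂ)) (η : ℝ) (v : α → ℂ) : Prop :=
  Γ.memU x V0 v ∧ (Γ.Estar x 2 * Γ.Amat 2 * Γ.Estar x 2).mulVec v = (η : ℂ) • v

/-- The subspace `M v` of the standard module, where `M` is the Bose–Mesner algebra
(the subalgebra of `Mat_X(ℂ)` generated by the adjacency matrix). -/
def Mspan (v : α → ℂ) : Submodule ℂ (α → ℂ) :=
  Submodule.span ℂ
    {w | ∃ B ∈ Algebra.adjoin ℂ ({Γ.Amat 1} : Set (Matrix α α ℂ)), w = B.mulVec v}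

/-- Isomorphism of `T`-modules: a linear bijection `W → W'` commuting with every
element of `T`. -/
def TIso (x : α) (W W' : Submodule ℂ (α → ℂ)) : Prop :=
  ∃ σ : (α → ℂ) →ₗ[ℂ] (α → ℂ), Set.BijOn σ (W : Set (α → ℂ)) (W' : Set (α → ℂ)) ∧
    ∀ B ∈ Γ.Talg x, ∀ w ∈ W, σ (B.mulVec w) = B.mulVec (σ w)

/-- The scalar `Δ = (k-2)(c_3-1) - (c_2-1) p²₂₂`. -/
def Delta : ℝ := (Γ.k - 2) * (Γ.c 3 - 1) - (Γ.c 2 - 1) * (Γ.p 2 2 2 : ℝ)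

/-- `Γ` is taut (with respect to the eigenvalue sequence `θ`): `Δ ≠ 0` and equality
holds in MacLean's fundamental bound. -/
def IsTaut (θ : ℕ → ℝ) : Prop :=
  Γ.Delta ≠ 0 ∧
  Γ.b 3 * (Γ.b 2 * (Γ.k - 2) - (Γ.c 2 - 1) * (θ 1) ^ 2) *
      (Γ.b 2 * (Γ.k - 2) - (Γ.c 2 - 1) * (θ (Γ.D / 2)) ^ 2) =
    Γ.b 1 * Γ.Delta * ((θ 1) ^ 2 - Γ.b 2) * (Γ.b 2 - (θ (Γ.D / 2)) ^ 2)

/-- `Γ` is spectrally taut with respect to `x`: each local eigenvalue `η_i`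
with `k+1 ≤ i ≤ k₂` equals `θ̃_1` or `θ̃_d`. -/
def SpectrallyTaut (x : α) (θ : ℕ → ℝ) : Prop :=
  ∃ η : ℕ → ℝ, Γ.IsLocalEigSeq x η ∧
    ∀ i : ℕ, Γ.p 0 1 1 + 1 ≤ i → i ≤ Γ.p 0 2 2 →
      η i = Γ.tilde (θ 1) ∨ η i = Γ.tilde (θ (Γ.D / 2))

/-- `Γ` is taut with respect to `x`: every irreducible `T(x)`-module with endpoint 2
is thin with local eigenvalue `θ̃_1` or `θ̃_d`. -/
def TautWrt (x : α) (θ : ℕ → ℝ) : Prop :=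
  ∀ W : Submodule ℂ (α → ℂ), Γ.IsIrreducibleTModule x W → Γ.HasEndpoint x W 2 →
    Γ.IsThin x W ∧
      (Γ.HasLocalEig x W (Γ.tilde (θ 1)) ∨ Γ.HasLocalEig x W (Γ.tilde (θ (Γ.D / 2))))

end BDRG


namespace BDRG

variable {α : Type} [Fintype α] [DecidableEq α] (Γ : BDRG α)

/-! ### Graph-theoretic helpers -/

lemma exists_step {x y : α} (h : 0 < Γ.G.dist x y) :
    ∃ z, Γ.G.Adj x z ∧ Γ.G.dist z y = Γ.G.dist x y - 1 := by
  obtain ⟨w, hw⟩ := (Γ.hconn x y).exists_walk_length_eq_dist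
  cases w with
  | nil => simp at hw; simp at h
  | cons ha q =>
      rename_i u
      refine ⟨u, ha, ?_⟩
      have h1 : Γ.G.dist u y ≤ q.length := SimpleGraph.dist_le q
      have h2 : Γ.G.dist x y ≤ Γ.G.dist x u + Γ.G.dist u y :=
        Γ.hconn.dist_triangle
      have h3 : Γ.G.dist x u ≤ 1 := by
        have := SimpleGraph.dist_le (SimpleGraph.Walk.cons ha SimpleGraph.Walk.nil)
        simpa using this
      simp only [SimpleGraph.Walk.length_cons] at hw
      omega

lemma exists_near {x y : α} (h : 0 < Γ.G.dist x y) :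
    ∃ z, Γ.G.Adj z y ∧ Γ.G.dist x z = Γ.G.dist x y - 1 := by
  rw [SimpleGraph.dist_comm] at h
  obtain ⟨z, hz1, hz2⟩ := Γ.exists_step h
  refine ⟨z, hz1.symm, ?_⟩
  rw [SimpleGraph.dist_comm, hz2, SimpleGraph.dist_comm]

lemma exists_pair : ∀ h, h ≤ Γ.D → ∃ x y : α, Γ.G.dist x y = h := by
  obtain ⟨x, y, hxy⟩ := Γ.hdiam
  have key : ∀ m, m ≤ Γ.D → ∃ z : α, Γ.G.dist x z = Γ.D - m := by
    intro m
    induction m with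
    | zero => intro _; exact ⟨y, by simpa using hxy⟩
    | succ m ih =>
        intro hm
        obtain ⟨z, hz⟩ := ih (by omega)
        have hz0 : 0 < Γ.G.dist x z := by omega
        obtain ⟨z', _, hz'⟩ := Γ.exists_near hz0
        exact ⟨z', by omega⟩
  intro h hh
  obtain ⟨z, hz⟩ := key (Γ.D - h) (by omega)
  exact ⟨x, z, by omega⟩

include Γ in
lemma nonempty_vert : Nonempty α := by
  obtain ⟨x, _, _⟩ := Γ.hdiam
  exact ⟨x⟩

/-! ### Intersection number facts -/

lemma card_pos_of_mem {x y : α} {i j : ℕ} (z : α)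
    (hz : Γ.G.dist x z = i ∧ Γ.G.dist z y = j) :
    0 < Nat.card {z : α // Γ.G.dist x z = i ∧ Γ.G.dist z y = j} :=
  Nat.card_pos_iff.mpr ⟨⟨z, hz⟩, inferInstance⟩

lemma b_eq {j : ℕ} (hj : j < Γ.D) : Γ.b j = (Γ.p j 1 (j+1) : ℝ) := by
  rw [BDRG.b, if_neg (by omega : ¬ j = Γ.D)]

lemma c_eq {j : ℕ} (hj : j ≠ 0) : Γ.c j = (Γ.p j 1 (j-1) : ℝ) := by
  rw [BDRG.c, if_neg hj]

lemma k_eq : Γ.k = (Γ.p 0 1 1 : ℝ) := by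
  have hD := Γ.hD
  rw [BDRG.k, Γ.b_eq (by omega)]

lemma c_pos {j : ℕ} (h1 : 1 ≤ j) (hD : j ≤ Γ.D) : 0 < Γ.c j := by
  obtain ⟨x, y, hxy⟩ := Γ.exists_pair j hD
  obtain ⟨z, hz1, hz2⟩ := Γ.exists_step (by omega : 0 < Γ.G.dist x y)
  have hcard := Γ.hp j 1 (j - 1) hD (by omega) (by omega) x y hxy
  have hpos : 0 < Γ.p j 1 (j-1) := by
    rw [← hcard]
    exact Γ.card_pos_of_mem z ⟨SimpleGraph.dist_eq_one_iff_adj.mpr hz1, by omega⟩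
  rw [Γ.c_eq (by omega)]
  exact_mod_cast hpos

lemma b_pos {j : ℕ} (hD : j + 1 ≤ Γ.D) : 0 < Γ.b j := by
  obtain ⟨x, y, hxy⟩ := Γ.exists_pair (j+1) hD
  obtain ⟨z, hz1, hz2⟩ := Γ.exists_step (by omega : 0 < Γ.G.dist x y)
  have hzy : Γ.G.dist z y = j := by omega
  have hcard := Γ.hp j 1 (j+1) (by omega) (by omega) hD z y hzy
  have hpos : 0 < Γ.p j 1 (j+1) := by
    rw [← hcard]
    refine Γ.card_pos_of_mem x ⟨?_, hxy⟩
    rw [SimpleGraph.dist_comm]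
    exact SimpleGraph.dist_eq_one_iff_adj.mpr hz1
  rw [Γ.b_eq (by omega)]
  exact_mod_cast hpos

lemma k_pos : 0 < Γ.k := Γ.b_pos (by have := Γ.hD; omega)

lemma c_one : Γ.c 1 = 1 := by
  have hD := Γ.hD
  obtain ⟨x, y, hxy⟩ := Γ.exists_pair 1 (by omega)
  have hcard := Γ.hp 1 1 0 (by omega) (by omega) (by omega) x y hxy
  have : Nat.card {z : α // Γ.G.dist x z = 1 ∧ Γ.G.dist z y = 0} = 1 := by
    rw [Nat.card_eq_one_iff_unique]
    constructor
    · constructor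
      intro ⟨z1, hz1⟩ ⟨z2, hz2⟩
      have e1 : z1 = y := (Γ.hconn.dist_eq_zero_iff).mp hz1.2
      have e2 : z2 = y := (Γ.hconn.dist_eq_zero_iff).mp hz2.2
      subst e1; subst e2; rfl
    · exact ⟨⟨y, hxy, by simp⟩⟩
  rw [Γ.c_eq (by omega)]
  rw [this] at hcard
  simp [← hcard]

lemma card_neighbors (x : α) :
    Fintype.card {z : α // Γ.G.dist x z = 1} = Γ.p 0 1 1 := by
  have hD := Γ.hD
  have hcard := Γ.hp 0 1 1 (by omega) (by omega) (by omega) x x (by simp)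
  rw [Nat.card_eq_fintype_card] at hcard
  rw [← hcard]
  apply Fintype.card_congr
  apply Equiv.subtypeEquivRight
  intro z
  constructor
  · intro h; exact ⟨h, by rwa [SimpleGraph.dist_comm]⟩
  · intro h; exact h.1

lemma dist_ne_of_adjlike {x y z : α} {j : ℕ} (hj1 : 1 ≤ j) (hjD : j ≤ Γ.D)
    (hxy : Γ.G.dist x y = j) (hxz : Γ.G.dist x z = 1) : Γ.G.dist z y ≠ j := by
  intro hzy
  have h0 := Γ.hbip j 1 j hjD (by omega) hjD ⟨j, by ring⟩
  have hcard := Γ.hp j 1 j hjD (by omega) hjD x y hxy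
  rw [h0] at hcard
  have : IsEmpty {z : α // Γ.G.dist x z = 1 ∧ Γ.G.dist z y = j} := by
    rcases Nat.card_eq_zero.mp hcard with h | h
    · exact h
    · exact absurd h (not_infinite_iff_finite.mpr inferInstance)
  exact this.elim ⟨z, hxz, hzy⟩

lemma cb_sum {j : ℕ} (h1 : 1 ≤ j) (hD : j + 1 ≤ Γ.D) : Γ.c j + Γ.b j = Γ.k := by
  obtain ⟨x, y, hxy⟩ := Γ.exists_pair j (by omega)
  have key : ∀ z : α, Γ.G.dist x z = 1 ↔
      (Γ.G.dist x z = 1 ∧ Γ.G.dist z y = j - 1) ∨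
      (Γ.G.dist x z = 1 ∧ Γ.G.dist z y = j + 1) := by
    intro z
    constructor
    · intro h
      have hne := Γ.dist_ne_of_adjlike h1 (by omega) hxy h
      have t1 : Γ.G.dist z y ≤ Γ.G.dist z x + Γ.G.dist x y := Γ.hconn.dist_triangle
      have t2 : Γ.G.dist x y ≤ Γ.G.dist x z + Γ.G.dist z y := Γ.hconn.dist_triangle
      have t3 : Γ.G.dist z x = Γ.G.dist x z := SimpleGraph.dist_comm
      omega
    · rintro (⟨h, _⟩ | ⟨h, _⟩) <;> exact h
  have hdisj : ∀ z : α, ¬((Γ.G.dist x z = 1 ∧ Γ.G.dist z y = j - 1) ∧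
      (Γ.G.dist x z = 1 ∧ Γ.G.dist z y = j + 1)) := by
    rintro z ⟨⟨_, ha⟩, ⟨_, hb⟩⟩; omega
  have hcards : Fintype.card {z : α // Γ.G.dist x z = 1} =
      Fintype.card {z : α // Γ.G.dist x z = 1 ∧ Γ.G.dist z y = j - 1} +
      Fintype.card {z : α // Γ.G.dist x z = 1 ∧ Γ.G.dist z y = j + 1} := by
    rw [← Fintype.card_subtype_or_disjoint _ _
      (Pi.disjoint_iff.mpr fun z => Prop.disjoint_iff.mpr (hdisj z))]
    apply Fintype.card_congr
    exact Equiv.subtypeEquivRight key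
  have e1 := Γ.hp j 1 (j-1) (by omega) (by omega) (by omega) x y hxy
  have e2 := Γ.hp j 1 (j+1) (by omega) (by omega) (by omega) x y hxy
  rw [Nat.card_eq_fintype_card] at e1 e2
  rw [Γ.card_neighbors x, e1, e2] at hcards
  rw [Γ.c_eq (by omega), Γ.b_eq (by omega), Γ.k_eq]
  exact_mod_cast hcards.symm

/-! ### Bipartite parity -/

lemma adj_dist_flip {x y u : α} (ha : Γ.G.Adj y u) :
    Γ.G.dist x u = Γ.G.dist x y + 1 ∨ Γ.G.dist x y = Γ.G.dist x u + 1 := by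
  have h1 : Γ.G.dist y u = 1 := SimpleGraph.dist_eq_one_iff_adj.mpr ha
  have t1 : Γ.G.dist x u ≤ Γ.G.dist x y + Γ.G.dist y u := Γ.hconn.dist_triangle
  have t2 : Γ.G.dist x y ≤ Γ.G.dist x u + Γ.G.dist u y := Γ.hconn.dist_triangle
  have t3 : Γ.G.dist u y = Γ.G.dist y u := SimpleGraph.dist_comm
  have hne : Γ.G.dist x u ≠ Γ.G.dist x y := by
    intro he
    by_cases h0 : Γ.G.dist x y = 0
    · have e1 : x = y := Γ.hconn.dist_eq_zero_iff.mp h0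
      have e2 : x = u := Γ.hconn.dist_eq_zero_iff.mp (by omega)
      subst e1; subst e2
      exact Γ.G.loopless.irrefl _ ha
    · set a := Γ.G.dist x y with hay
      have hyx : Γ.G.dist y x = a := SimpleGraph.dist_comm.trans rfl
      have h0' := Γ.hbip a 1 a (Γ.hdist x y) (by have := Γ.hD; omega) (Γ.hdist x y)
        ⟨a, by ring⟩
      have hcard := Γ.hp a 1 a (Γ.hdist x y) (by have := Γ.hD; omega) (Γ.hdist x y)
        y x hyx
      rw [h0'] at hcard
      have hempty : IsEmpty {z : α // Γ.G.dist y z = 1 ∧ Γ.G.dist z x = a} := by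
        rcases Nat.card_eq_zero.mp hcard with h | h
        · exact h
        · exact absurd h (not_infinite_iff_finite.mpr inferInstance)
      exact hempty.elim ⟨u, h1, by rw [SimpleGraph.dist_comm]; omega⟩
  omega

lemma walk_parity (x0 : α) {y z : α} (w : Γ.G.Walk y z) :
    Γ.G.dist x0 z % 2 = (Γ.G.dist x0 y + w.length) % 2 := by
  induction w with
  | nil => simp
  | cons ha q ih =>
      rename_i a b' c' _
      rcases Γ.adj_dist_flip (x := x0) ha with h | h <;>
        · simp only [SimpleGraph.Walk.length_cons]
          omega

lemma dist_parity (x0 y z : α) :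
    Γ.G.dist x0 z % 2 = (Γ.G.dist x0 y + Γ.G.dist y z) % 2 := by
  obtain ⟨w, hw⟩ := (Γ.hconn y z).exists_walk_length_eq_dist
  rw [← hw]
  exact Γ.walk_parity x0 w

end BDRG

lemma neg_one_pow_congr' {R : Type*} [Monoid R] [HasDistribNeg R] {n m : ℕ}
    (h : n % 2 = m % 2) : (-1 : R) ^ n = (-1) ^ m := by
  rcases Nat.even_or_odd n with he | ho
  · have : Even m := by rw [Nat.even_iff] at *; omega
    rw [he.neg_one_pow, this.neg_one_pow]
  · have : Odd m := by rw [Nat.odd_iff] at *; omega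
    rw [ho.neg_one_pow, this.neg_one_pow]

namespace BDRG

variable {α : Type} [Fintype α] [DecidableEq α] (Γ : BDRG α)

/-! ### Matrix lemmas -/

lemma amat_apply (i : ℕ) (x y : α) :
    Γ.Amat i x y = if Γ.G.dist x y = i then 1 else 0 := rfl

lemma amat_zero : Γ.Amat 0 = 1 := by
  ext x y
  rw [Γ.amat_apply, Matrix.one_apply]
  by_cases h : x = y
  · simp [h]
  · rw [if_neg h, if_neg]
    rw [Γ.hconn.dist_eq_zero_iff]
    exact h

lemma card_dist_pair (x y : α) (i j : ℕ) :
    (∑ z : α, (if Γ.G.dist x z = i then (1:ℂ) else 0) *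
      (if Γ.G.dist z y = j then (1:ℂ) else 0)) =
    (Nat.card {z : α // Γ.G.dist x z = i ∧ Γ.G.dist z y = j} : ℂ) := by
  rw [Nat.card_eq_fintype_card, Fintype.card_subtype]
  rw [Finset.card_filter]
  push_cast
  apply Finset.sum_congr rfl
  intro z _
  by_cases h1 : Γ.G.dist x z = i <;> by_cases h2 : Γ.G.dist z y = j <;>
    simp [h1, h2]

lemma amat_mul_amat {h : ℕ} (h1 : 1 ≤ h) (hD : h + 1 ≤ Γ.D) :
    Γ.Amat 1 * Γ.Amat h = ((Γ.b (h-1) : ℝ) : ℂ) • Γ.Amat (h-1) +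
      ((Γ.c (h+1) : ℝ) : ℂ) • Γ.Amat (h+1) := by
  have hDD := Γ.hD
  have hb : ((Γ.b (h-1) : ℝ) : ℂ) = (Γ.p (h-1) 1 h : ℂ) := by
    have e : h - 1 + 1 = h := by omega
    rw [Γ.b_eq (by omega : h - 1 < Γ.D), e]
    push_cast
    rfl
  have hc : ((Γ.c (h+1) : ℝ) : ℂ) = (Γ.p (h+1) 1 h : ℂ) := by
    have e : h + 1 - 1 = h := by omega
    rw [Γ.c_eq (by omega : h + 1 ≠ 0), e]
    push_cast
    rfl
  ext x y
  rw [Matrix.mul_apply]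
  simp only [Γ.amat_apply, Matrix.add_apply, Matrix.smul_apply, smul_eq_mul]
  rw [Γ.card_dist_pair x y 1 h]
  have hdD : Γ.G.dist x y ≤ Γ.D := Γ.hdist x y
  have hcard := Γ.hp (Γ.G.dist x y) 1 h hdD (by omega) (by omega) x y rfl
  rw [hcard, hb, hc]
  by_cases hc1 : Γ.G.dist x y = h + 1
  · rw [if_neg (by omega), if_pos hc1, hc1]
    ring
  · by_cases hc2 : Γ.G.dist x y + 1 = h
    · rw [if_pos (by omega), if_neg (by omega)]
      have e : Γ.G.dist x y = h - 1 := by omega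
      rw [e]
      ring
    · rw [if_neg (by omega), if_neg (by omega)]
      by_cases hc3 : Γ.G.dist x y = h
      · rw [Γ.hbip (Γ.G.dist x y) 1 h hdD (by omega) (by omega) ⟨h, by omega⟩]
        push_cast
        ring
      · have hempty : IsEmpty {z : α // Γ.G.dist x z = 1 ∧ Γ.G.dist z y = h} := by
          constructor
          rintro ⟨z, hz1, hz2⟩
          have t1 : Γ.G.dist x y ≤ Γ.G.dist x z + Γ.G.dist z y := Γ.hconn.dist_triangle
          have t2 : Γ.G.dist z y ≤ Γ.G.dist z x + Γ.G.dist x y := Γ.hconn.dist_triangle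
          have t3 : Γ.G.dist z x = Γ.G.dist x z := SimpleGraph.dist_comm
          omega
        rw [← hcard, Nat.card_of_isEmpty]
        push_cast
        ring

lemma amat_eig {θ : ℝ} {v : α → ℂ} (hv : (Γ.Amat 1).mulVec v = ((θ : ℝ) : ℂ) • v) :
    ∀ h, h ≤ Γ.D → (Γ.Amat h).mulVec v = (((Γ.f h).eval θ : ℝ) : ℂ) • v := by
  intro h
  induction h using Nat.strong_induction_on with
  | _ h ih =>
    match h with
    | 0 => intro _; rw [Γ.amat_zero, Matrix.one_mulVec]; simp [BDRG.f]
    | 1 => intro _; simpa [BDRG.f] using hv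
    | (m+2) =>
      intro hle
      have hc : (0:ℝ) < Γ.c (m+2) := Γ.c_pos (by omega) (by omega)
      have hcne : ((Γ.c (m+2) : ℝ) : ℂ) ≠ 0 := by
        simp only [ne_eq, Complex.ofReal_eq_zero]
        exact ne_of_gt hc
      have recur := Γ.amat_mul_amat (h := m+1) (by omega) (by omega)
      have happ := congrArg (fun M => Matrix.mulVec M v) recur
      simp only [Matrix.add_mulVec, Matrix.smul_mulVec, ← Matrix.mulVec_mulVec] at happ
      rw [ih (m+1) (by omega) (by omega), Matrix.mulVec_smul, hv] at happ
      have hm : (m + 1 - 1 : ℕ) = m := by omega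
      rw [hm, ih m (by omega) (by omega)] at happ
      have e211 : Γ.c (m+1+1) = Γ.c (m+2) := by norm_num
      have e212 : Γ.Amat (m+1+1) = Γ.Amat (m+2) := by norm_num
      rw [e211, e212] at happ
      have heval : (Γ.f (m+2)).eval θ =
          (Γ.c (m+2))⁻¹ * ((Γ.f (m+1)).eval θ * θ - Γ.b m * (Γ.f m).eval θ) := by
        show (Polynomial.C (Γ.c (m + 2))⁻¹ *
          (Polynomial.X * Γ.f (m + 1) - Polynomial.C (Γ.b m) * Γ.f m)).eval θ = _
        simp only [Polynomial.eval_mul, Polynomial.eval_sub, Polynomial.eval_C,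
          Polynomial.eval_X]
        ring
      funext x
      have happx := congrFun happ x
      simp only [Pi.add_apply, Pi.smul_apply, smul_eq_mul] at happx ⊢
      rw [heval]
      push_cast
      apply mul_left_cancel₀ hcne
      have step1 : ((Γ.c (m+2) : ℝ) : ℂ) * ((Γ.Amat (m+2)).mulVec v x) =
          (((Γ.f (m+1)).eval θ : ℝ) : ℂ) * ((θ : ℝ) : ℂ) * v x -
            ((Γ.b m : ℝ) : ℂ) * (((Γ.f m).eval θ : ℝ) : ℂ) * v x := by
        linear_combination -happx
      rw [step1]
      field_simp

end BDRG

namespace BDRG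

variable {α : Type} [Fintype α] [DecidableEq α] (Γ : BDRG α)

lemma col_sum (z : α) : ∑ x : α, Γ.Amat 1 x z = ((Γ.k : ℝ) : ℂ) := by
  have e1 : (∑ x : α, Γ.Amat 1 x z) =
      (Fintype.card {x : α // Γ.G.dist x z = 1} : ℂ) := by
    rw [Fintype.card_subtype, Finset.card_filter]
    push_cast
    apply Finset.sum_congr rfl
    intro x _
    by_cases h : Γ.G.dist x z = 1 <;> simp [h, Γ.amat_apply]
  have e2 : Fintype.card {x : α // Γ.G.dist x z = 1} =
      Fintype.card {x : α // Γ.G.dist z x = 1} := by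
    apply Fintype.card_congr
    apply Equiv.subtypeEquivRight
    intro x
    rw [SimpleGraph.dist_comm]
  rw [e1, e2, Γ.card_neighbors z, Γ.k_eq]
  push_cast
  rfl

lemma signed_col_sum (x0 z : α) :
    ∑ x : α, (-1:ℂ)^(Γ.G.dist x0 x) * Γ.Amat 1 x z =
      -((Γ.k : ℝ) : ℂ) * (-1:ℂ)^(Γ.G.dist x0 z) := by
  have e1 : ∀ x : α, (-1:ℂ)^(Γ.G.dist x0 x) * Γ.Amat 1 x z =
      (if Γ.G.dist x z = 1 then -(-1:ℂ)^(Γ.G.dist x0 z) else 0) := by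
    intro x
    rw [Γ.amat_apply]
    by_cases h : Γ.G.dist x z = 1
    · rw [if_pos h, if_pos h, mul_one]
      have hzx : Γ.G.dist z x = 1 := by rw [SimpleGraph.dist_comm]; exact h
      have hpar : Γ.G.dist x0 x % 2 = (Γ.G.dist x0 z + 1) % 2 := by
        have := Γ.dist_parity x0 z x
        omega
      rw [neg_one_pow_congr' hpar, pow_succ]
      ring
    · rw [if_neg h, if_neg h, mul_zero]
  rw [Finset.sum_congr rfl (fun x _ => e1 x)]
  rw [Finset.sum_ite, Finset.sum_const, Finset.sum_const_zero, add_zero]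
  have e2 : (Finset.univ.filter (fun x => Γ.G.dist x z = 1)).card =
      Γ.p 0 1 1 := by
    rw [← Fintype.card_subtype]
    rw [show Fintype.card {x : α // Γ.G.dist x z = 1} =
        Fintype.card {x : α // Γ.G.dist z x = 1} from
      Fintype.card_congr (Equiv.subtypeEquivRight (fun x => by
        rw [SimpleGraph.dist_comm]))]
    exact Γ.card_neighbors z
  rw [e2, nsmul_eq_mul, Γ.k_eq]
  push_cast
  ring

end BDRG

namespace BDRG

variable {α : Type} [Fintype α] [DecidableEq α] (Γ : BDRG α)

lemma weight_sum_zero {θ : ℝ} {v : α → ℂ}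
    (hv : (Γ.Amat 1).mulVec v = ((θ : ℝ) : ℂ) • v) (hne : θ ≠ Γ.k) :
    ∑ z : α, v z = 0 := by
  have h1 : ∑ x : α, ((Γ.Amat 1).mulVec v) x = ((θ:ℝ):ℂ) * ∑ z : α, v z := by
    rw [hv]
    simp only [Pi.smul_apply, smul_eq_mul]
    rw [Finset.mul_sum]
  have h2 : ∑ x : α, ((Γ.Amat 1).mulVec v) x = ((Γ.k:ℝ):ℂ) * ∑ z : α, v z := by
    simp only [Matrix.mulVec, dotProduct]
    rw [Finset.sum_comm]
    rw [Finset.mul_sum]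
    apply Finset.sum_congr rfl
    intro z _
    rw [← Finset.sum_mul, Γ.col_sum z]
  have h3 : (((θ:ℝ):ℂ) - ((Γ.k:ℝ):ℂ)) * ∑ z : α, v z = 0 := by
    rw [sub_mul, ← h1, ← h2, sub_self]
  rcases mul_eq_zero.mp h3 with h | h
  · exfalso
    apply hne
    have : ((θ:ℝ):ℂ) = ((Γ.k:ℝ):ℂ) := by linear_combination h
    exact_mod_cast this
  · exact h

lemma signed_sum_zero (x0 : α) {θ : ℝ} {v : α → ℂ}
    (hv : (Γ.Amat 1).mulVec v = ((θ : ℝ) : ℂ) • v) (hne : θ ≠ -Γ.k) :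
    ∑ z : α, (-1:ℂ)^(Γ.G.dist x0 z) * v z = 0 := by
  have h1 : ∑ x : α, (-1:ℂ)^(Γ.G.dist x0 x) * ((Γ.Amat 1).mulVec v) x =
      ((θ:ℝ):ℂ) * ∑ z : α, (-1:ℂ)^(Γ.G.dist x0 z) * v z := by
    rw [hv]
    simp only [Pi.smul_apply, smul_eq_mul]
    rw [Finset.mul_sum]
    apply Finset.sum_congr rfl
    intro z _
    ring
  have h2 : ∑ x : α, (-1:ℂ)^(Γ.G.dist x0 x) * ((Γ.Amat 1).mulVec v) x =
      -((Γ.k:ℝ):ℂ) * ∑ z : α, (-1:ℂ)^(Γ.G.dist x0 z) * v z := by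
    simp only [Matrix.mulVec, dotProduct, Finset.mul_sum]
    rw [Finset.sum_comm]
    apply Finset.sum_congr rfl
    intro z _
    have : ∑ x : α, (-1:ℂ)^(Γ.G.dist x0 x) * (Γ.Amat 1 x z * v z) =
        (∑ x : α, (-1:ℂ)^(Γ.G.dist x0 x) * Γ.Amat 1 x z) * v z := by
      rw [Finset.sum_mul]
      apply Finset.sum_congr rfl
      intro x _
      ring
    rw [this, Γ.signed_col_sum x0 z]
    ring
  have h3 : (((θ:ℝ):ℂ) + ((Γ.k:ℝ):ℂ)) * ∑ z : α, (-1:ℂ)^(Γ.G.dist x0 z) * v z = 0 := by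
    rw [add_mul, ← h1]
    rw [h2]
    ring
  rcases mul_eq_zero.mp h3 with h | h
  · exfalso
    apply hne
    have : ((θ:ℝ):ℂ) = -((Γ.k:ℝ):ℂ) := by linear_combination h
    exact_mod_cast this
  · exact h

lemma pp_eval_eq (i : ℕ) (θ : ℝ) : (Γ.pp i).eval θ =
    ∑ h ∈ Finset.range (i+1), if (i - h) % 2 = 0 then (Γ.f h).eval θ else 0 := by
  rw [BDRG.pp, Polynomial.eval_finset_sum]
  apply Finset.sum_congr rfl
  intro h _
  split <;> simp

lemma split1 (θ : ℝ) : (Γ.pp Γ.D).eval θ + (Γ.pp (Γ.D - 1)).eval θ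
    = ∑ h ∈ Finset.range (Γ.D + 1), (Γ.f h).eval θ := by
  have hD := Γ.hD
  rw [Γ.pp_eval_eq, Γ.pp_eval_eq]
  have e1 : Γ.D - 1 + 1 = Γ.D := by omega
  rw [e1]
  have e2 : ∑ h ∈ Finset.range Γ.D, (if (Γ.D - 1 - h) % 2 = 0 then (Γ.f h).eval θ else 0)
      = ∑ h ∈ Finset.range (Γ.D+1), (if (Γ.D - h) % 2 = 1 then (Γ.f h).eval θ else 0) := by
    rw [Finset.sum_range_succ, if_neg (by omega), add_zero]
    apply Finset.sum_congr rfl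
    intro h hh
    rw [Finset.mem_range] at hh
    by_cases hc : (Γ.D - 1 - h) % 2 = 0
    · rw [if_pos hc, if_pos (by omega)]
    · rw [if_neg hc, if_neg (by omega)]
  rw [e2, ← Finset.sum_add_distrib]
  apply Finset.sum_congr rfl
  intro h hh
  rw [Finset.mem_range] at hh
  by_cases hc : (Γ.D - h) % 2 = 0
  · rw [if_pos hc, if_neg (by omega), add_zero]
  · rw [if_neg hc, if_pos (by omega), zero_add]

lemma split2 (θ : ℝ) :
    (-1:ℝ)^Γ.D * (Γ.pp Γ.D).eval θ + (-1:ℝ)^(Γ.D-1) * (Γ.pp (Γ.D-1)).eval θ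
    = ∑ h ∈ Finset.range (Γ.D + 1), (-1:ℝ)^h * (Γ.f h).eval θ := by
  have hD := Γ.hD
  rw [Γ.pp_eval_eq, Γ.pp_eval_eq]
  have e1 : Γ.D - 1 + 1 = Γ.D := by omega
  rw [e1, Finset.mul_sum, Finset.mul_sum]
  have e2 : ∑ h ∈ Finset.range Γ.D,
        (-1:ℝ)^(Γ.D-1) * (if (Γ.D - 1 - h) % 2 = 0 then (Γ.f h).eval θ else 0)
      = ∑ h ∈ Finset.range (Γ.D+1),
        (if (Γ.D - h) % 2 = 1 then (-1:ℝ)^h * (Γ.f h).eval θ else 0) := by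
    rw [Finset.sum_range_succ, if_neg (by omega), add_zero]
    apply Finset.sum_congr rfl
    intro h hh
    rw [Finset.mem_range] at hh
    by_cases hc : (Γ.D - 1 - h) % 2 = 0
    · rw [if_pos hc, if_pos (by omega), neg_one_pow_congr' (by omega : (Γ.D - 1) % 2 = h % 2)]
    · rw [if_neg hc, if_neg (by omega), mul_zero]
  rw [e2, ← Finset.sum_add_distrib]
  apply Finset.sum_congr rfl
  intro h hh
  rw [Finset.mem_range] at hh
  by_cases hc : (Γ.D - h) % 2 = 0
  · rw [if_pos hc, if_neg (by omega), add_zero,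
      neg_one_pow_congr' (by omega : Γ.D % 2 = h % 2)]
  · rw [if_neg hc, if_pos (by omega), mul_zero, zero_add]

lemma pp_root {θ : ℝ}
    (heig : Module.End.HasEigenvalue (Matrix.mulVecLin (Γ.Amat 1)) (((θ:ℝ)):ℂ))
    (hne1 : θ ≠ Γ.k) (hne2 : θ ≠ -Γ.k) :
    (Γ.pp (Γ.D - 1)).eval θ = 0 ∧ (Γ.pp Γ.D).eval θ = 0 := by
  have hD := Γ.hD
  obtain ⟨v, hv, hvne⟩ := heig.exists_hasEigenvector
  have hv' : (Γ.Amat 1).mulVec v = ((θ:ℝ):ℂ) • v := by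
    rw [← Matrix.mulVecLin_apply]
    exact Module.End.mem_eigenspace_iff.mp hv
  obtain ⟨x, hx⟩ : ∃ x, v x ≠ 0 := by
    by_contra hcon
    push_neg at hcon
    exact hvne (funext hcon)
  have key : ∀ w : ℕ → ℂ,
      (∑ h ∈ Finset.range (Γ.D+1), w h * (((Γ.f h).eval θ : ℝ):ℂ)) * v x =
      ∑ z : α, (∑ h ∈ Finset.range (Γ.D+1), w h * (if Γ.G.dist x z = h then 1 else 0)) * v z := by
    intro w
    rw [Finset.sum_mul]
    have e1 : ∀ h ∈ Finset.range (Γ.D+1),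
        w h * (((Γ.f h).eval θ : ℝ):ℂ) * v x = ∑ z : α, w h * ((if Γ.G.dist x z = h then (1:ℂ) else 0) * v z) := by
      intro h hh
      rw [Finset.mem_range] at hh
      have := congrFun (Γ.amat_eig hv' h (by omega)) x
      simp only [Matrix.mulVec, dotProduct, Pi.smul_apply, smul_eq_mul,
        Γ.amat_apply] at this
      rw [mul_assoc, ← this, ← Finset.mul_sum]
    rw [Finset.sum_congr rfl e1, Finset.sum_comm]
    apply Finset.sum_congr rfl
    intro z _
    rw [Finset.sum_mul]
    apply Finset.sum_congr rfl
    intro h _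
    ring
  have hT1 : (∑ h ∈ Finset.range (Γ.D+1), (Γ.f h).eval θ) = 0 := by
    have h1 := key (fun _ => 1)
    simp only [one_mul] at h1
    have h2 : ∀ z : α, (∑ h ∈ Finset.range (Γ.D+1),
        (if Γ.G.dist x z = h then (1:ℂ) else 0)) = 1 := by
      intro z
      rw [Finset.sum_ite_eq]
      rw [if_pos (Finset.mem_range.mpr (by have := Γ.hdist x z; omega))]
    simp only [h2, one_mul] at h1
    rw [Γ.weight_sum_zero hv' hne1] at h1
    rcases mul_eq_zero.mp h1 with h | h
    · have : ((∑ h ∈ Finset.range (Γ.D+1), (Γ.f h).eval θ : ℝ) : ℂ) = 0 := by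
        push_cast
        exact h
      exact_mod_cast this
    · exact absurd h hx
  have hT2 : (∑ h ∈ Finset.range (Γ.D+1), (-1:ℝ)^h * (Γ.f h).eval θ) = 0 := by
    have h1 := key (fun h => (-1:ℂ)^h)
    have h2 : ∀ z : α, (∑ h ∈ Finset.range (Γ.D+1),
        (-1:ℂ)^h * (if Γ.G.dist x z = h then 1 else 0)) = (-1:ℂ)^(Γ.G.dist x z) := by
      intro z
      have : ∀ h ∈ Finset.range (Γ.D+1), (-1:ℂ)^h * (if Γ.G.dist x z = h then 1 else 0)
          = (if Γ.G.dist x z = h then (-1:ℂ)^h else 0) := by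
        intro h _
        by_cases hc : Γ.G.dist x z = h <;> simp [hc]
      rw [Finset.sum_congr rfl this, Finset.sum_ite_eq]
      rw [if_pos (Finset.mem_range.mpr (by have := Γ.hdist x z; omega))]
    simp only [h2] at h1
    rw [Γ.signed_sum_zero x hv' hne2] at h1
    rcases mul_eq_zero.mp h1 with h | h
    · have : ((∑ h ∈ Finset.range (Γ.D+1), (-1:ℝ)^h * (Γ.f h).eval θ : ℝ) : ℂ) = 0 := by
        push_cast
        exact h
      exact_mod_cast this
    · exact absurd h hx
  rw [← Γ.split1 θ] at hT1
  rw [← Γ.split2 θ] at hT2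
  have hsign : (-1:ℝ)^Γ.D = -(-1:ℝ)^(Γ.D - 1) := by
    conv_lhs => rw [show Γ.D = (Γ.D - 1) + 1 by omega]
    rw [pow_succ]
    ring
  rw [hsign] at hT2
  have hpn : (-1:ℝ)^(Γ.D-1) ≠ 0 := pow_ne_zero _ (by norm_num)
  have hab : (Γ.pp (Γ.D-1)).eval θ = (Γ.pp Γ.D).eval θ := by
    have hz : (-1:ℝ)^(Γ.D-1) * ((Γ.pp (Γ.D-1)).eval θ - (Γ.pp Γ.D).eval θ) = 0 := by
      linear_combination hT2
    rcases mul_eq_zero.mp hz with h | h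
    · exact absurd h hpn
    · linarith
  constructor <;> linarith

end BDRG

namespace BDRG

variable {α : Type} [Fintype α] [DecidableEq α] (Γ : BDRG α)

lemma f_zero : Γ.f 0 = 1 := rfl
lemma f_one : Γ.f 1 = Polynomial.X := rfl
lemma f_two_step (i : ℕ) : Γ.f (i+2) = Polynomial.C (Γ.c (i + 2))⁻¹ *
    (Polynomial.X * Γ.f (i + 1) - Polynomial.C (Γ.b i) * Γ.f i) := rfl

lemma pp_zero : Γ.pp 0 = 1 := by
  rw [BDRG.pp, Finset.sum_range_one]
  norm_num
  exact Γ.f_zero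

lemma pp_one : Γ.pp 1 = Polynomial.X := by
  rw [BDRG.pp, Finset.sum_range_succ, Finset.sum_range_one]
  norm_num
  exact Γ.f_one

lemma pp_succ2 (i : ℕ) : Γ.pp (i+2) = Γ.pp i + Γ.f (i+2) := by
  rw [BDRG.pp, BDRG.pp, Finset.sum_range_succ, if_pos (by omega), Finset.sum_range_succ,
    if_neg (by omega)]
  rw [add_zero]
  congr 1
  apply Finset.sum_congr rfl
  intro h hh
  rw [Finset.mem_range] at hh
  by_cases hc : (i - h) % 2 = 0
  · rw [if_pos hc, if_pos (by omega)]
  · rw [if_neg hc, if_neg (by omega)]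

lemma f_deg : ∀ i, i ≤ Γ.D → (Γ.f i).natDegree = i ∧ 0 < (Γ.f i).leadingCoeff := by
  intro i
  induction i using Nat.strong_induction_on with
  | _ i ih =>
    match i with
    | 0 => intro _; rw [Γ.f_zero]; simp
    | 1 => intro _; rw [Γ.f_one]; simp
    | (m+2) =>
      intro hle
      have hc : (0:ℝ) < Γ.c (m+2) := Γ.c_pos (by omega) (by omega)
      obtain ⟨hd1, hl1⟩ := ih (m+1) (by omega) (by omega)
      obtain ⟨hd0, hl0⟩ := ih m (by omega) (by omega)
      have hne1 : Γ.f (m+1) ≠ 0 := by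
        intro hz
        rw [hz] at hl1
        simp at hl1
      have hXmul : (Polynomial.X * Γ.f (m+1)).natDegree = m + 2 := by
        rw [Polynomial.natDegree_mul Polynomial.X_ne_zero hne1, Polynomial.natDegree_X, hd1]
        omega
      have hCmul : (Polynomial.C (Γ.b m) * Γ.f m).natDegree < m + 2 := by
        calc (Polynomial.C (Γ.b m) * Γ.f m).natDegree ≤ (Γ.f m).natDegree :=
              Polynomial.natDegree_C_mul_le _ _
        _ < m + 2 := by omega
      have hsub : (Polynomial.X * Γ.f (m+1) - Polynomial.C (Γ.b m) * Γ.f m).natDegree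
          = m + 2 := by
        rw [Polynomial.natDegree_sub_eq_left_of_natDegree_lt (by omega)]
        exact hXmul
      have hlc : (Polynomial.X * Γ.f (m+1) - Polynomial.C (Γ.b m) * Γ.f m).leadingCoeff
          = (Γ.f (m+1)).leadingCoeff := by
        have hz : (Polynomial.C (Γ.b m) * Γ.f m).coeff (m+2) = 0 :=
          Polynomial.coeff_eq_zero_of_natDegree_lt hCmul
        have hx : (Polynomial.X * Γ.f (m+1)).coeff (m+2) = (Γ.f (m+1)).leadingCoeff := by
          have h' := Polynomial.coeff_X_mul (Γ.f (m+1)) (m+1)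
          rw [show m+1+1 = m+2 from rfl] at h'
          rw [h', Polynomial.leadingCoeff, hd1]
        rw [Polynomial.leadingCoeff, hsub, Polynomial.coeff_sub, hz, hx, sub_zero]
      constructor
      · rw [Γ.f_two_step, Polynomial.natDegree_C_mul (by positivity), hsub]
      · rw [Γ.f_two_step, Polynomial.leadingCoeff_mul, Polynomial.leadingCoeff_C, hlc]
        positivity

lemma pp_deg : ∀ i, i ≤ Γ.D →
    (Γ.pp i).natDegree = i ∧ (Γ.pp i).leadingCoeff = (Γ.f i).leadingCoeff := by
  intro i hle
  rcases Nat.eq_zero_or_pos i with h0 | hpos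
  · subst h0
    rw [Γ.pp_zero, Γ.f_zero]
    exact ⟨Polynomial.natDegree_one, rfl⟩
  obtain ⟨hdi, hli⟩ := Γ.f_deg i hle
  have hrw : Γ.pp i = (∑ h ∈ Finset.range i,
      if (i - h) % 2 = 0 then Γ.f h else 0) + Γ.f i := by
    rw [BDRG.pp, Finset.sum_range_succ, if_pos (by omega)]
  have hrest : (∑ h ∈ Finset.range i,
      if (i - h) % 2 = 0 then Γ.f h else 0).natDegree < i := by
    have hb : (∑ h ∈ Finset.range i,
        if (i - h) % 2 = 0 then Γ.f h else 0).natDegree ≤ i - 1 := by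
      apply Polynomial.natDegree_sum_le_of_forall_le
      intro h hh
      rw [Finset.mem_range] at hh
      by_cases hc : (i - h) % 2 = 0
      · rw [if_pos hc]
        have := (Γ.f_deg h (by omega)).1
        omega
      · rw [if_neg hc, Polynomial.natDegree_zero]
        omega
    omega
  constructor
  · rw [hrw, Polynomial.natDegree_add_eq_right_of_natDegree_lt (by omega), hdi]
  · rw [hrw, Polynomial.leadingCoeff,
      Polynomial.natDegree_add_eq_right_of_natDegree_lt (by omega), hdi,
      Polynomial.coeff_add, Polynomial.coeff_eq_zero_of_natDegree_lt (by omega), zero_add]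
    conv_rhs => rw [Polynomial.leadingCoeff, hdi]

lemma pp_lc_pos {i : ℕ} (hle : i ≤ Γ.D) : 0 < (Γ.pp i).leadingCoeff := by
  rw [(Γ.pp_deg i hle).2]
  exact (Γ.f_deg i hle).2

lemma pp_ne_zero {i : ℕ} (hle : i ≤ Γ.D) : Γ.pp i ≠ 0 := by
  intro hz
  have h := Γ.pp_lc_pos hle
  rw [hz, Polynomial.leadingCoeff_zero] at h
  exact lt_irrefl 0 h

lemma pp_rec : ∀ i, 1 ≤ i → i + 2 ≤ Γ.D →
    Polynomial.X * Γ.pp i =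
      Polynomial.C (Γ.c (i+1)) * Γ.pp (i+1) + Polynomial.C (Γ.b (i+1)) * Γ.pp (i-1) := by
  have hD := Γ.hD
  intro i
  induction i using Nat.strong_induction_on with
  | _ i ih =>
    match i with
    | 0 => intro h; omega
    | 1 =>
      intro _ hle
      have hc2 : (0:ℝ) < Γ.c 2 := Γ.c_pos (by omega) (by omega)
      have hcb2 : Γ.c 2 + Γ.b 2 = Γ.k := Γ.cb_sum (by omega) (by omega)
      show Polynomial.X * Γ.pp 1 =
        Polynomial.C (Γ.c 2) * Γ.pp 2 + Polynomial.C (Γ.b 2) * Γ.pp 0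
      have e2 : Γ.pp 2 = Γ.pp 0 + Γ.f 2 := Γ.pp_succ2 0
      have e5 : Polynomial.C (Γ.c 2) * Γ.f 2 =
          Polynomial.X * Polynomial.X - Polynomial.C (Γ.b 0) := by
        have ef : Γ.f 2 = Polynomial.C (Γ.c 2)⁻¹ *
            (Polynomial.X * Γ.f 1 - Polynomial.C (Γ.b 0) * Γ.f 0) := Γ.f_two_step 0
        rw [ef, Γ.f_one, Γ.f_zero, ← mul_assoc, ← Polynomial.C_mul,
          mul_inv_cancel₀ (ne_of_gt hc2), Polynomial.C_1, one_mul, mul_one]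
      have hcc : Polynomial.C (Γ.c 2) + Polynomial.C (Γ.b 2) = Polynomial.C (Γ.b 0) := by
        rw [← Polynomial.C_add, hcb2]
        rfl
      rw [Γ.pp_one, e2, Γ.pp_zero]
      linear_combination -e5 - hcc
    | 2 =>
      intro _ hle
      have hc3 : (0:ℝ) < Γ.c 3 := Γ.c_pos (by omega) (by omega)
      have hcb3 : Γ.c 3 + Γ.b 3 = Γ.k := Γ.cb_sum (by omega) (by omega)
      have hcb1 : Γ.c 1 + Γ.b 1 = Γ.k := Γ.cb_sum (by omega) (by omega)
      show Polynomial.X * Γ.pp 2 =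
        Polynomial.C (Γ.c 3) * Γ.pp 3 + Polynomial.C (Γ.b 3) * Γ.pp 1
      have e3 : Γ.pp 3 = Γ.pp 1 + Γ.f 3 := Γ.pp_succ2 1
      have e2 : Γ.pp 2 = Γ.pp 0 + Γ.f 2 := Γ.pp_succ2 0
      have e5 : Polynomial.C (Γ.c 3) * Γ.f 3 =
          Polynomial.X * Γ.f 2 - Polynomial.C (Γ.b 1) * Polynomial.X := by
        have ef : Γ.f 3 = Polynomial.C (Γ.c 3)⁻¹ *
            (Polynomial.X * Γ.f 2 - Polynomial.C (Γ.b 1) * Γ.f 1) := Γ.f_two_step 1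
        rw [ef, Γ.f_one, ← mul_assoc, ← Polynomial.C_mul,
          mul_inv_cancel₀ (ne_of_gt hc3), Polynomial.C_1, one_mul]
      have hcc : Polynomial.C (Γ.c 3) + Polynomial.C (Γ.b 3) =
          Polynomial.C (Γ.c 1) + Polynomial.C (Γ.b 1) := by
        rw [← Polynomial.C_add, ← Polynomial.C_add, hcb3, hcb1]
      have hc1C : Polynomial.C (Γ.c 1) = 1 := by
        rw [Γ.c_one, Polynomial.C_1]
      rw [Γ.pp_one, e3, Γ.pp_one, e2, Γ.pp_zero]
      linear_combination -e5 - Polynomial.X * hcc - Polynomial.X * hc1C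
    | (m+3) =>
      intro _ hle
      have hIH := ih (m+1) (by omega) (by omega) (by omega)
      have hcm : (0:ℝ) < Γ.c (m+4) := Γ.c_pos (by omega) (by omega)
      have hcb4 : Γ.c (m+4) + Γ.b (m+4) = Γ.k := Γ.cb_sum (by omega) (by omega)
      have hcb2 : Γ.c (m+2) + Γ.b (m+2) = Γ.k := Γ.cb_sum (by omega) (by omega)
      show Polynomial.X * Γ.pp (m+3) =
        Polynomial.C (Γ.c (m+4)) * Γ.pp (m+4) + Polynomial.C (Γ.b (m+4)) * Γ.pp (m+2)
      have hIH' : Polynomial.X * Γ.pp (m+1) =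
          Polynomial.C (Γ.c (m+2)) * Γ.pp (m+2) + Polynomial.C (Γ.b (m+2)) * Γ.pp m := hIH
      have e3 : Γ.pp (m+3) = Γ.pp (m+1) + Γ.f (m+3) := Γ.pp_succ2 (m+1)
      have e4 : Γ.pp (m+4) = Γ.pp (m+2) + Γ.f (m+4) := Γ.pp_succ2 (m+2)
      have e6 : Γ.pp (m+2) = Γ.pp m + Γ.f (m+2) := Γ.pp_succ2 m
      have e5 : Polynomial.C (Γ.c (m+4)) * Γ.f (m+4) =
          Polynomial.X * Γ.f (m+3) - Polynomial.C (Γ.b (m+2)) * Γ.f (m+2) := by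
        have ef : Γ.f (m+4) = Polynomial.C (Γ.c (m+4))⁻¹ *
            (Polynomial.X * Γ.f (m+3) - Polynomial.C (Γ.b (m+2)) * Γ.f (m+2)) :=
          Γ.f_two_step (m+2)
        rw [ef, ← mul_assoc, ← Polynomial.C_mul,
          mul_inv_cancel₀ (ne_of_gt hcm), Polynomial.C_1, one_mul]
      have hcc : Polynomial.C (Γ.c (m+4)) + Polynomial.C (Γ.b (m+4)) =
          Polynomial.C (Γ.c (m+2)) + Polynomial.C (Γ.b (m+2)) := by
        rw [← Polynomial.C_add, ← Polynomial.C_add, hcb4, hcb2]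
      rw [e3, e4, e6]
      linear_combination -(Γ.pp m + Γ.f (m+2)) * hcc - e5 + hIH' + Polynomial.C (Γ.c (m+2)) * e6


end BDRG

lemma chain_max_root (P : ℕ → Polynomial ℝ) (γ β : ℕ → ℝ) (n : ℕ) (hn : 1 ≤ n)
    (h0 : P 0 = 1) (h1 : P 1 = Polynomial.X)
    (hγ : ∀ i, 1 ≤ i → i + 1 ≤ n → 0 < γ i) (hβ : ∀ i, 1 ≤ i → i + 1 ≤ n → 0 < β i)
    (hrec : ∀ i, 1 ≤ i → i + 1 ≤ n →
      Polynomial.X * P i = Polynomial.C (γ i) * P (i+1) + Polynomial.C (β i) * P (i-1))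
    (hdeg : ∀ i, i ≤ n → (P i).natDegree = i) (hlc : ∀ i, i ≤ n → 0 < (P i).leadingCoeff) :
    ∃ t : ℝ, (P n).eval t = 0 ∧ (∀ s, t < s → 0 < (P n).eval s) ∧
      ∀ j, j < n → ∀ s, t ≤ s → 0 < (P j).eval s := by
  suffices key : ∀ m, 1 ≤ m → m ≤ n → ∃ t : ℝ, (P m).eval t = 0 ∧
      (∀ s, t < s → 0 < (P m).eval s) ∧ ∀ j, j < m → ∀ s, t ≤ s → 0 < (P j).eval s from
    key n hn le_rfl
  intro m
  induction m with
  | zero => omega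
  | succ m ihm =>
    intro _ hmn
    rcases Nat.eq_zero_or_pos m with hm0 | hm1
    · subst hm0
      refine ⟨0, ?_, ?_, ?_⟩
      · rw [h1]; simp
      · intro s hs; rw [h1]; simpa using hs
      · intro j hj s hs
        interval_cases j
        rw [h0]; simp
    · obtain ⟨t, ht0, htpos, htlow⟩ := ihm hm1 (by omega)
      have hrect := congrArg (fun q => Polynomial.eval t q) (hrec m hm1 (by omega))
      simp only [Polynomial.eval_mul, Polynomial.eval_add, Polynomial.eval_C,
        Polynomial.eval_X] at hrect
      rw [ht0, mul_zero] at hrect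
      have hprev : 0 < (P (m-1)).eval t := htlow (m-1) (by omega) t le_rfl
      have hγm := hγ m hm1 (by omega)
      have hβm := hβ m hm1 (by omega)
      have hneg : (P (m+1)).eval t < 0 := by nlinarith
      have hPne : P (m+1) ≠ 0 := by
        intro hz
        have h' := hlc (m+1) (by omega)
        rw [hz, Polynomial.leadingCoeff_zero] at h'
        exact lt_irrefl 0 h'
      have hdegpos : 0 < (P (m+1)).degree := by
        rw [Polynomial.degree_eq_natDegree hPne]
        exact_mod_cast (by rw [hdeg (m+1) (by omega)]; omega : 0 < (P (m+1)).natDegree)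
      have htend := Polynomial.tendsto_atTop_of_leadingCoeff_nonneg (P (m+1)) hdegpos
        (le_of_lt (hlc (m+1) (by omega)))
      have hcont : Continuous fun x : ℝ => (P (m+1)).eval x := Polynomial.continuous _
      -- the finite set of roots of P (m+1)
      have hfin : {x : ℝ | (P (m+1)).eval x = 0}.Finite := by
        have := Polynomial.finite_setOf_isRoot hPne
        simpa [Polynomial.IsRoot] using this
      -- find a positive point above any given bound, and a root above t
      have haux : ∀ u : ℝ, ((P (m+1)).eval u < 0) → ∃ r, u < r ∧ (P (m+1)).eval r = 0 := by
        intro u hu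
        obtain ⟨s₀, hs₀pos, hs₀gt⟩ :=
          ((htend.eventually (Filter.eventually_gt_atTop 0)).and
            (Filter.eventually_gt_atTop u)).exists
        have hsub := intermediate_value_Icc (le_of_lt hs₀gt) hcont.continuousOn
        have h0mem : (0:ℝ) ∈ Set.Icc ((P (m+1)).eval u) ((P (m+1)).eval s₀) :=
          ⟨le_of_lt hu, le_of_lt hs₀pos⟩
        obtain ⟨r, hrmem, hr0⟩ := hsub h0mem
        replace hr0 : (P (m+1)).eval r = 0 := hr0
        refine ⟨r, ?_, hr0⟩
        rcases eq_or_lt_of_le hrmem.1 with he | hl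
        · exfalso; rw [he] at hu; rw [hr0] at hu; exact lt_irrefl 0 hu
        · exact hl
      obtain ⟨r, hrt, hr0⟩ := haux t hneg
      have hFne : hfin.toFinset.Nonempty := ⟨r, by rw [Set.Finite.mem_toFinset]; exact hr0⟩
      set t' := hfin.toFinset.max' hFne with ht'def
      have ht'mem : (P (m+1)).eval t' = 0 := by
        have := hfin.toFinset.max'_mem hFne
        rwa [Set.Finite.mem_toFinset] at this
      have htt' : t < t' := lt_of_lt_of_le hrt
        (hfin.toFinset.le_max' r (by rw [Set.Finite.mem_toFinset]; exact hr0))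
      have ht'pos : ∀ s, t' < s → 0 < (P (m+1)).eval s := by
        intro s hs
        rcases lt_trichotomy 0 ((P (m+1)).eval s) with h | h | h
        · exact h
        · exfalso
          have : s ∈ hfin.toFinset := by rw [Set.Finite.mem_toFinset]; exact h.symm
          have := hfin.toFinset.le_max' s this
          linarith
        · exfalso
          obtain ⟨r₂, hr₂s, hr₂0⟩ := haux s h
          have : r₂ ∈ hfin.toFinset := by rw [Set.Finite.mem_toFinset]; exact hr₂0
          have := hfin.toFinset.le_max' r₂ this
          linarith
      refine ⟨t', ht'mem, ht'pos, ?_⟩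
      intro j hj s hs
      rcases Nat.lt_succ_iff_lt_or_eq.mp hj with h | h
      · exact htlow j h s (by linarith)
      · subst h
        exact htpos s (by linarith)

namespace BDRG

variable {α : Type} [Fintype α] [DecidableEq α] (Γ : BDRG α)

/-- The reflected polynomials `(-1)^i pp_i(-X)`. -/
def Qp (i : ℕ) : Polynomial ℝ :=
  Polynomial.C ((-1:ℝ)^i) * (Γ.pp i).comp (-Polynomial.X)

lemma Qp_eval (i : ℕ) (s : ℝ) : (Γ.Qp i).eval s = (-1:ℝ)^i * (Γ.pp i).eval (-s) := by
  rw [BDRG.Qp, Polynomial.eval_mul, Polynomial.eval_C, Polynomial.eval_comp,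
    Polynomial.eval_neg, Polynomial.eval_X]

lemma Qp_zero : Γ.Qp 0 = 1 := by
  rw [BDRG.Qp, Γ.pp_zero]
  simp

lemma Qp_one : Γ.Qp 1 = Polynomial.X := by
  rw [BDRG.Qp, Γ.pp_one, Polynomial.X_comp]
  simp

lemma negX_natDegree : (-Polynomial.X : Polynomial ℝ).natDegree = 1 := by
  rw [Polynomial.natDegree_neg, Polynomial.natDegree_X]

lemma Qp_deg {i : ℕ} (hle : i ≤ Γ.D) : (Γ.Qp i).natDegree = i := by
  rw [BDRG.Qp, Polynomial.natDegree_C_mul (pow_ne_zero _ (by norm_num)),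
    Polynomial.natDegree_comp, negX_natDegree, (Γ.pp_deg i hle).1, mul_one]

lemma Qp_lc {i : ℕ} (hle : i ≤ Γ.D) : (Γ.Qp i).leadingCoeff = (Γ.pp i).leadingCoeff := by
  have hsq : ((-1:ℝ)^i) * ((-1:ℝ)^i) = 1 := by
    rw [← pow_add]
    exact Even.neg_one_pow ⟨i, rfl⟩
  rw [BDRG.Qp, Polynomial.leadingCoeff_mul, Polynomial.leadingCoeff_C,
    Polynomial.leadingCoeff_comp (by rw [negX_natDegree]; omega)]
  rw [Polynomial.leadingCoeff_neg, Polynomial.leadingCoeff_X, (Γ.pp_deg i hle).1]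
  rw [mul_comm ((Γ.pp i).leadingCoeff), ← mul_assoc, hsq, one_mul]

lemma Qp_lc_pos {i : ℕ} (hle : i ≤ Γ.D) : 0 < (Γ.Qp i).leadingCoeff := by
  rw [Γ.Qp_lc hle]
  exact Γ.pp_lc_pos hle

lemma Qp_rec : ∀ i, 1 ≤ i → i + 2 ≤ Γ.D →
    Polynomial.X * Γ.Qp i =
      Polynomial.C (Γ.c (i+1)) * Γ.Qp (i+1) + Polynomial.C (Γ.b (i+1)) * Γ.Qp (i-1) := by
  intro i hi1 hi2
  obtain ⟨j, rfl⟩ : ∃ j, i = j + 1 := ⟨i - 1, by omega⟩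
  have base := congrArg
    (fun q : Polynomial ℝ => Polynomial.C ((-1:ℝ)^(j+1+1)) * q.comp (-Polynomial.X))
    (Γ.pp_rec (j+1) hi1 hi2)
  simp only [Polynomial.mul_comp, Polynomial.add_comp, Polynomial.X_comp,
    Polynomial.C_comp] at base
  show Polynomial.X * Γ.Qp (j+1) =
    Polynomial.C (Γ.c (j+2)) * Γ.Qp (j+2) + Polynomial.C (Γ.b (j+2)) * Γ.Qp j
  rw [BDRG.Qp, BDRG.Qp, BDRG.Qp]
  have s1 : ((-1:ℝ))^(j+2) = (-1:ℝ)^j := by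
    rw [pow_succ, pow_succ]
    ring
  have s2 : ((-1:ℝ))^(j+1) = -(-1:ℝ)^j := by
    rw [pow_succ]
    ring
  rw [s1, s2]
  rw [show (j+1+1 : ℕ) = j+2 from rfl, s1] at base
  rw [show (j+1+1 : ℕ) = j+2 from rfl, show (j+1-1 : ℕ) = j from rfl] at base
  simp only [map_neg] at *
  linear_combination base

lemma eig_bound {θ : ℝ} {v : α → ℂ} (hv : (Γ.Amat 1).mulVec v = ((θ:ℝ):ℂ) • v)
    (hvne : v ≠ 0) : |θ| ≤ Γ.k := by
  have hne : Nonempty α := Γ.nonempty_vert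
  obtain ⟨x, _, hmax⟩ := Finset.exists_max_image Finset.univ
    (fun z => ‖v z‖) ⟨Classical.arbitrary α, Finset.mem_univ _⟩
  have hvx : (0:ℝ) < ‖v x‖ := by
    rcases eq_or_lt_of_le (norm_nonneg (v x)) with h | h
    · exfalso
      apply hvne
      funext z
      have hz := hmax z (Finset.mem_univ z)
      rw [← h] at hz
      have := norm_nonneg (v z)
      have : ‖v z‖ = 0 := le_antisymm hz this
      exact norm_eq_zero.mp this
    · exact h
  have happx := congrFun hv x
  simp only [Matrix.mulVec, dotProduct, Pi.smul_apply, smul_eq_mul,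
    Γ.amat_apply] at happx
  have h1 : ‖((θ:ℝ):ℂ) * v x‖ = |θ| * ‖v x‖ := by
    rw [norm_mul, Complex.norm_real, Real.norm_eq_abs]
  have h2 : ‖∑ z : α, (if Γ.G.dist x z = 1 then (1:ℂ) else 0) * v z‖ ≤
      ∑ z : α, (if Γ.G.dist x z = 1 then (1:ℝ) else 0) * ‖v x‖ := by
    refine le_trans (norm_sum_le _ _) ?_
    apply Finset.sum_le_sum
    intro z _
    by_cases h : Γ.G.dist x z = 1
    · simp only [h, if_pos, if_true, one_mul]
      exact hmax z (Finset.mem_univ z)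
    · simp [h]
  have h3 : ∑ z : α, (if Γ.G.dist x z = 1 then (1:ℝ) else 0) = Γ.k := by
    rw [Finset.sum_ite, Finset.sum_const, Finset.sum_const_zero, add_zero,
      nsmul_eq_mul, mul_one, ← Fintype.card_subtype, Γ.card_neighbors x, Γ.k_eq]
  have h4 : |θ| * ‖v x‖ ≤ Γ.k * ‖v x‖ := by
    rw [← h1]
    rw [← happx]
    refine le_trans h2 ?_
    rw [← Finset.sum_mul, h3]
  exact le_of_mul_le_mul_right h4 hvx

end BDRG

/-- signs of `p_i(θ_1)` and `p_i(θ_(D-1))`. -/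
theorem statement_5 {α : Type} [Fintype α] [DecidableEq α] (Γ : BDRG α)
    (θ : ℕ → ℝ) (hθ : Γ.IsEigenvalueSeq θ) :
    ((∀ i : ℕ, i ≤ Γ.D - 2 → 0 < (Γ.pp i).eval (θ 1)) ∧
      (Γ.pp (Γ.D - 1)).eval (θ 1) = 0 ∧ (Γ.pp Γ.D).eval (θ 1) = 0) ∧
    ((∀ i : ℕ, i ≤ Γ.D - 2 → 0 < (-1 : ℝ) ^ i * (Γ.pp i).eval (θ (Γ.D - 1))) ∧
      (Γ.pp (Γ.D - 1)).eval (θ (Γ.D - 1)) = 0 ∧ (Γ.pp Γ.D).eval (θ (Γ.D - 1)) = 0) := by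
  obtain ⟨hθ0, hθmono, hθeig, -⟩ := hθ
  have hD := Γ.hD
  have hbound : -Γ.k ≤ θ Γ.D := by
    obtain ⟨v, hvmem, hvne⟩ := (hθeig Γ.D le_rfl).exists_hasEigenvector
    have hv' : (Γ.Amat 1).mulVec v = ((θ Γ.D : ℝ):ℂ) • v := by
      rw [← Matrix.mulVecLin_apply]
      exact Module.End.mem_eigenspace_iff.mp hvmem
    have h1 := Γ.eig_bound hv' hvne
    have h2 := abs_le.mp h1
    linarith [h2.1]
  have hroots : ∀ j, 1 ≤ j → j ≤ Γ.D - 1 →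
      (Γ.pp (Γ.D - 1)).eval (θ j) = 0 ∧ (Γ.pp Γ.D).eval (θ j) = 0 := by
    intro j h1 h2
    apply Γ.pp_root (hθeig j (by omega))
    · have := hθmono 0 j (by omega) (by omega)
      rw [hθ0] at this
      exact ne_of_lt this
    · have := hθmono j Γ.D (by omega) le_rfl
      intro he
      rw [he] at this
      linarith
  -- first half
  obtain ⟨t, htroot, htpos, htlow⟩ := chain_max_root Γ.pp (fun i => Γ.c (i+1))
    (fun i => Γ.b (i+1)) (Γ.D - 1) (by omega) Γ.pp_zero Γ.pp_one
    (fun i hi1 hi2 => Γ.c_pos (by omega) (by omega))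
    (fun i hi1 hi2 => Γ.b_pos (by omega))
    (fun i hi1 hi2 => Γ.pp_rec i hi1 (by omega))
    (fun i hi => (Γ.pp_deg i (by omega)).1)
    (fun i hi => Γ.pp_lc_pos (by omega))
  have hinj : Set.InjOn θ ↑(Finset.Icc 1 (Γ.D - 1)) := by
    intro a ha b hb hab
    simp only [Finset.coe_Icc, Set.mem_Icc] at ha hb
    by_contra hne
    rcases lt_or_gt_of_ne hne with h | h
    · have := hθmono a b h (by omega)
      rw [hab] at this
      exact lt_irrefl _ this
    · have := hθmono b a h (by omega)
      rw [hab] at this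
      exact lt_irrefl _ this
  have hRcard : ((Finset.Icc 1 (Γ.D - 1)).image θ).card = Γ.D - 1 := by
    rw [Finset.card_image_of_injOn hinj, Nat.card_Icc]
    omega
  have hdegD1 : (Γ.pp (Γ.D - 1)).natDegree = Γ.D - 1 := (Γ.pp_deg _ (by omega)).1
  have hne0 : Γ.pp (Γ.D - 1) ≠ 0 := Γ.pp_ne_zero (by omega)
  have htmem : t ∈ (Finset.Icc 1 (Γ.D - 1)).image θ := by
    by_contra htm
    have hsub2 : (insert t ((Finset.Icc 1 (Γ.D - 1)).image θ)).val ⊆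
        (Γ.pp (Γ.D - 1)).roots := by
      intro s hs
      rw [Finset.mem_val, Finset.mem_insert] at hs
      rw [Polynomial.mem_roots hne0]
      rcases hs with rfl | hs
      · exact htroot
      · obtain ⟨j, hj, rfl⟩ := Finset.mem_image.mp hs
        rw [Finset.mem_Icc] at hj
        exact (hroots j hj.1 hj.2).1
    have hcard := Polynomial.card_le_degree_of_subset_roots hsub2
    rw [Finset.card_insert_of_notMem htm, hRcard, hdegD1] at hcard
    omega
  obtain ⟨j0, hj0mem, hj0⟩ := Finset.mem_image.mp htmem
  rw [Finset.mem_Icc] at hj0mem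
  have hta : t ≤ θ 1 := by
    have : θ j0 ≤ θ 1 := by
      rcases eq_or_lt_of_le hj0mem.1 with h | h
      · rw [← h]
      · exact le_of_lt (hθmono 1 j0 h (by omega))
    linarith [hj0 ▸ this]
  have htb : θ 1 ≤ t := by
    by_contra hlt
    push_neg at hlt
    have h1 := htpos (θ 1) hlt
    have h0 := (hroots 1 (by omega) (by omega)).1
    linarith
  have hteq : t = θ 1 := le_antisymm hta htb
  -- second half
  obtain ⟨t', ht'root, ht'pos, ht'low⟩ := chain_max_root Γ.Qp (fun i => Γ.c (i+1))
    (fun i => Γ.b (i+1)) (Γ.D - 1) (by omega) Γ.Qp_zero Γ.Qp_one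
    (fun i hi1 hi2 => Γ.c_pos (by omega) (by omega))
    (fun i hi1 hi2 => Γ.b_pos (by omega))
    (fun i hi1 hi2 => Γ.Qp_rec i hi1 (by omega))
    (fun i hi => Γ.Qp_deg (by omega))
    (fun i hi => Γ.Qp_lc_pos (by omega))
  have hQroots : ∀ j, 1 ≤ j → j ≤ Γ.D - 1 → (Γ.Qp (Γ.D - 1)).eval (-θ j) = 0 := by
    intro j h1 h2
    rw [Γ.Qp_eval, neg_neg, (hroots j h1 h2).1, mul_zero]
  have hinj' : Set.InjOn (fun j => -θ j) ↑(Finset.Icc 1 (Γ.D - 1)) := by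
    intro a ha b hb hab
    exact hinj ha hb (neg_inj.mp hab)
  have hR'card : ((Finset.Icc 1 (Γ.D - 1)).image (fun j => -θ j)).card = Γ.D - 1 := by
    rw [Finset.card_image_of_injOn hinj', Nat.card_Icc]
    omega
  have hQdegD1 : (Γ.Qp (Γ.D - 1)).natDegree = Γ.D - 1 := Γ.Qp_deg (by omega)
  have hQne0 : Γ.Qp (Γ.D - 1) ≠ 0 := by
    intro hz
    have h' := Γ.Qp_lc_pos (i := Γ.D - 1) (by omega)
    rw [hz, Polynomial.leadingCoeff_zero] at h'
    exact lt_irrefl 0 h'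
  have ht'mem : t' ∈ (Finset.Icc 1 (Γ.D - 1)).image (fun j => -θ j) := by
    by_contra htm
    have hsub2 : (insert t' ((Finset.Icc 1 (Γ.D - 1)).image (fun j => -θ j))).val ⊆
        (Γ.Qp (Γ.D - 1)).roots := by
      intro s hs
      rw [Finset.mem_val, Finset.mem_insert] at hs
      rw [Polynomial.mem_roots hQne0]
      rcases hs with rfl | hs
      · exact ht'root
      · obtain ⟨j, hj, rfl⟩ := Finset.mem_image.mp hs
        rw [Finset.mem_Icc] at hj
        exact hQroots j hj.1 hj.2
    have hcard := Polynomial.card_le_degree_of_subset_roots hsub2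
    rw [Finset.card_insert_of_notMem htm, hR'card, hQdegD1] at hcard
    omega
  obtain ⟨j1, hj1mem, hj1⟩ := Finset.mem_image.mp ht'mem
  rw [Finset.mem_Icc] at hj1mem
  have hta' : t' ≤ -θ (Γ.D - 1) := by
    have : θ (Γ.D - 1) ≤ θ j1 := by
      rcases eq_or_lt_of_le hj1mem.2 with h | h
      · rw [h]
      · exact le_of_lt (hθmono j1 (Γ.D - 1) h (by omega))
    have h2 : -θ j1 ≤ -θ (Γ.D - 1) := by linarith
    linarith [hj1 ▸ h2]
  have htb' : -θ (Γ.D - 1) ≤ t' := by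
    by_contra hlt
    push_neg at hlt
    have h1 := ht'pos (-θ (Γ.D - 1)) hlt
    have h0 := hQroots (Γ.D - 1) (by omega) le_rfl
    linarith
  have ht'eq : t' = -θ (Γ.D - 1) := le_antisymm hta' htb'
  refine ⟨⟨?_, ?_, ?_⟩, ?_, ?_, ?_⟩
  · intro i hi
    have := htlow i (by omega) t le_rfl
    rwa [hteq] at this
  · exact (hroots 1 (by omega) (by omega)).1
  · exact (hroots 1 (by omega) (by omega)).2
  · intro i hi
    have := ht'low i (by omega) t' le_rfl
    rw [ht'eq, Γ.Qp_eval, neg_neg] at this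
    exact this
  · exact (hroots (Γ.D - 1) (by omega) le_rfl).1
  · exact (hroots (Γ.D - 1) (by omega) le_rfl).2
end
end

section
/- Let Γ be a bipartite distance-regular graph with diameter D ≥ 4, valency k ≥ 3, fix a vertex x, and let E denote a primitive idempotent of Γ with dual eigenvalue sequence θ_0*, θ_1*, …, θ_D*. Then |X| E_2* E E_2* = (θ_0* − θ_4*) E_2* + (θ_2* − θ_4*) E_2* A_2 E_2* + θ_4* E_2* J E_2*, where J is the all-ones matrix. -/
open Polynomial Finset Matrix

noncomputable section

attribute [local instance] Classical.propDecidable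

/-- the identity `|X| E₂* E E₂* = (θ₀*-θ₄*)E₂* + (θ₂*-θ₄*)E₂*A₂E₂*
+ θ₄* E₂* J E₂*`. -/
theorem statement_9 {α : Type} [Fintype α] [DecidableEq α] (Γ : BDRG α)
    (x : α) (t : ℝ)
    (ht : Module.End.HasEigenvalue (Matrix.mulVecLin (Γ.Amat 1)) ((t : ℂ)))
    (E : Matrix α α ℂ) (hE : Γ.IsPrimitiveIdempotent t E)
    (θs : ℕ → ℝ) (hθs : Γ.IsDualEigSeq E θs) :
    (Fintype.card α : ℂ) • (Γ.Estar x 2 * E * Γ.Estar x 2) =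
      ((θs 0 - θs 4 : ℝ) : ℂ) • Γ.Estar x 2 +
        ((θs 2 - θs 4 : ℝ) : ℂ) • (Γ.Estar x 2 * Γ.Amat 2 * Γ.Estar x 2) +
        ((θs 4 : ℝ) : ℂ) • (Γ.Estar x 2 * BDRG.Jmat α * Γ.Estar x 2) := by
  classical
  have hD := Γ.hD
  set d : α → ℂ := fun y => if Γ.G.dist x y = 2 then 1 else 0 with hd
  have hEs : Γ.Estar x 2 = Matrix.diagonal d := by
    ext y z
    by_cases h : y = z
    · subst h; simp [BDRG.Estar, Matrix.diagonal_apply_eq, hd]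
    · simp [BDRG.Estar, Matrix.diagonal_apply_ne _ h, h]
  have hcardpos : 0 < Fintype.card α := Fintype.card_pos_iff.mpr ⟨x⟩
  have hcard : (Fintype.card α : ℂ) ≠ 0 := Nat.cast_ne_zero.mpr hcardpos.ne'
  rw [BDRG.IsDualEigSeq] at hθs
  ext y z
  simp only [hEs, Matrix.smul_apply, Matrix.add_apply, Matrix.mul_diagonal,
    Matrix.diagonal_mul, smul_eq_mul]
  by_cases hy : Γ.G.dist x y = 2
  · by_cases hz : Γ.G.dist x z = 2
    · have hdy : d y = 1 := if_pos hy
      have hdz : d z = 1 := if_pos hz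
      have hyz4 : Γ.G.dist y z ≤ 4 := by
        calc Γ.G.dist y z ≤ Γ.G.dist y x + Γ.G.dist x z := Γ.hconn.dist_triangle
          _ = 4 := by rw [SimpleGraph.dist_comm, hy, hz]
      have heven : Γ.G.dist y z % 2 = 0 := by
        by_contra hodd
        have h1 := Γ.hp (Γ.G.dist y z) 2 2 (le_trans hyz4 hD) (by omega) (by omega) y z rfl
        have h2 := Γ.hbip (Γ.G.dist y z) 2 2 (le_trans hyz4 hD) (by omega) (by omega)
          (Nat.odd_iff.mpr (by omega))
        have hne : Nonempty {z' : α // Γ.G.dist y z' = 2 ∧ Γ.G.dist z' z = 2} :=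
          ⟨⟨x, by rw [SimpleGraph.dist_comm]; exact hy, hz⟩⟩
        have hpos : 0 < Nat.card {z' : α // Γ.G.dist y z' = 2 ∧ Γ.G.dist z' z = 2} :=
          Nat.card_pos
        omega
      have hEyz : E y z = (Fintype.card α : ℂ)⁻¹ * ((θs (Γ.G.dist y z) : ℝ) : ℂ) := by
        rw [hθs]
        simp only [Matrix.smul_apply, Matrix.sum_apply, BDRG.Amat, Matrix.of_apply,
          smul_eq_mul]
        congr 1
        rw [Finset.sum_eq_single (Γ.G.dist y z)]
        · rw [if_pos rfl, mul_one]
        · intro b _ hb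
          rw [if_neg (fun he => hb he.symm), mul_zero]
        · intro habs
          exact absurd (Finset.mem_range.mpr (by omega)) habs
      rw [hEyz, hdy, hdz]
      have hA2 : Γ.Amat 2 y z = if Γ.G.dist y z = 2 then 1 else 0 := rfl
      have hJ : BDRG.Jmat α y z = 1 := rfl
      have hdiagyz : (Matrix.diagonal d : Matrix α α ℂ) y z =
          if y = z then 1 else 0 := by
        by_cases h : y = z
        · subst h; simp [Matrix.diagonal_apply_eq, hdy]
        · simp [Matrix.diagonal_apply_ne _ h, h]
      rw [hA2, hJ, hdiagyz]
      have hzero : Γ.G.dist y z = 0 ↔ y = z := Γ.hconn.dist_eq_zero_iff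
      set h := Γ.G.dist y z with hh
      interval_cases h
      · rw [if_pos (hzero.mp rfl), if_neg (by omega : ¬(0 = 2))]
        push_cast
        field_simp
        ring
      · exact absurd heven (by omega)
      · have hne : y ≠ z := fun he => absurd (hzero.mpr he) (by omega)
        rw [if_neg hne, if_pos rfl]
        push_cast
        field_simp
        ring
      · exact absurd heven (by omega)
      · have hne : y ≠ z := fun he => absurd (hzero.mpr he) (by omega)
        rw [if_neg hne, if_neg (by omega : ¬(4 = 2))]
        push_cast
        field_simp
        ring
    · have hdz : d z = 0 := if_neg hz
      have hdiagyz : (Matrix.diagonal d : Matrix α α ℂ) y z = 0 := by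
        by_cases h : y = z
        · subst h; simp [Matrix.diagonal_apply_eq, hd, hz]
        · simp [Matrix.diagonal_apply_ne _ h]
      rw [hdz, hdiagyz]
      ring
  · have hdy : d y = 0 := if_neg hy
    have hdiagyz : (Matrix.diagonal d : Matrix α α ℂ) y z = 0 := by
      by_cases h : y = z
      · subst h; simp [Matrix.diagonal_apply_eq, hd, hy]
      · simp [Matrix.diagonal_apply_ne _ h]
    rw [hdy, hdiagyz]
    ring
end
end
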